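/- arXiv:2111.00482 — 6 statements merged into one kernel-verified Lean document; each statement's English description precedes it below -/
import Mathlib

section
/- If a type X is a retract of a type Y (i.e., there are maps s : X → Y and r : Y → X with r ∘ s = id) where the section s is injective and Y is a set (has proposition-valued equality, i.e., Y is a subsingleton-truncated 0-type; in classical terms, any type), and Y is equivalent to a type in a universe V, then X is equivalent to a type in V. -/
/-- If `X` is a retract of `Y` via an injective section `s` (with retraction `r`),
and `Y` is equivalent to a type in universe `w`, then `X` is equivalent to a type
in universe `w`. -/
theorem small_of_embedded_retract {X : Type u} {Y : Type v}
    (s : X → Y) (r : Y → X) (hrs : ∀ x, r (s x) = x)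
    (hs : Function.Injective s)
    (hY : ∃ Z : Type w, Nonempty (Z ≃ Y)) :
    ∃ Z : Type w, Nonempty (Z ≃ X) := by
  obtain ⟨Z, ⟨e⟩⟩ := hY
  have : Small.{w} Y := ⟨Z, ⟨e.symm⟩⟩
  have : Small.{w} X := small_of_injective hs
  obtain ⟨W, ⟨f⟩⟩ := this
  exact ⟨W, ⟨f.symm⟩⟩
end

section
/- If s : X → Y is a section (there is r : Y → X with r ∘ s = id) and s is an embedding (its fibers are propositions), then for every y : Y the fiber of s over y is equivalent to the proposition ‖s (r y) = y‖ (the propositional truncation of s(r y) = y). -/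
/-- If `s : X → Y` is a section (with retraction `r`) that is an embedding
(all fibers are propositions), then the fiber of `s` over `y` is equivalent to
the proposition `s (r y) = y`. -/
theorem fiber_of_section_embedding {X : Type u} {Y : Type v}
    (s : X → Y) (r : Y → X) (hrs : ∀ x, r (s x) = x)
    (hemb : ∀ y : Y, Subsingleton { x : X // s x = y }) (y : Y) :
    Nonempty ({ x : X // s x = y } ≃ PLift (s (r y) = y)) := by
  haveI := hemb y
  refine ⟨{
    toFun := fun p => ⟨by rw [← p.2, hrs]⟩
    invFun := fun h => ⟨r y, h.down⟩
    left_inv := fun p => Subsingleton.elim _ _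
    right_inv := fun h => rfl }⟩
end

section
/- Let (X, ≤) be a poset with designated elements x ≤ y such that x ≠ y. For any proposition P, if the family δ_{x,y,P} has a supremum s and s = x, then ¬P holds; and if s = y, then ¬¬P holds. -/
/-- In a nontrivial poset (designated `x ≤ y` with `x ≠ y`), if the family
`δ_{x,y,P}` has a supremum `s`, then `s = x` implies `¬P` and `s = y` implies `¬¬P`. -/
theorem delta_sup_weak_em {X : Type u} [PartialOrder X]
    (x y : X) (hxy : x ≤ y) (hne : x ≠ y) (P : Prop) (s : X)
    (h₁ : x ≤ s) (h₂ : P → y ≤ s)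
    (hleast : ∀ t : X, x ≤ t → (P → y ≤ t) → s ≤ t) :
    (s = x → ¬P) ∧ (s = y → ¬¬P) := by
  constructor
  · intro hs hp
    exact hne (le_antisymm hxy (hs ▸ h₂ hp))
  · intro hs hnp
    exact hne (le_antisymm hxy (hs ▸ hleast x le_rfl (fun p => absurd p hnp)))
end

section
/- In the poset Ω of propositions ordered by implication, the proposition False is strictly below a proposition P if and only if P holds, where 'x strictly below y' in a δ-complete poset means x ≤ y and, for every z ≥ y and every proposition P', the equality z = sup(δ_{x,z,P'}) implies P'. In Ω, sup(δ_{Q,R,P'}) = Q ∨ (R ∧ P'). -/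
/-- In `Ω = Prop`, `False` is strictly below `P` iff `P` holds, where
`x ⊏ y` means `x ≤ y` and for every `z ≥ y` and proposition `P'`,
`z = sup δ_{x,z,P'} = x ∨ (z ∧ P')` implies `P'`. -/
theorem false_strictly_below_iff (P : Prop) :
    ((False → P) ∧ ∀ Z : Prop, (P → Z) → ∀ P' : Prop, (Z = (False ∨ (Z ∧ P'))) → P')
      ↔ P := by
  constructor
  · rintro ⟨-, h⟩
    exact h P id P (propext (by tauto))
  · intro hP
    refine ⟨fun h => h.elim, fun Z hZ P' hEq => ?_⟩
    have : Z := hZ hP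
    rw [hEq] at this
    tauto
end

section
/- In a complete lattice (or sup-lattice) X with least element ⊥, the following are equivalent for y : X: (i) ⊥ ⊏ y; (ii) for every family α : I → X, if y ≤ sup α then I is inhabited (∃ i : I, True); (iii) there exists x : X with x ⊏ y. Here x ⊏ y means x ≤ y and for every z ≥ y and every proposition P, z = x ⊔ (⨆ (p : P), z) implies P. -/
/-- `x` is strictly below `y` in a sup-lattice: `x ≤ y` and for all `z ≥ y`
and propositions `P`, `z = x ⊔ (⨆ _ : P, z)` implies `P`. -/
def SBelowLat {X : Type u} [CompleteLattice X] (x y : X) : Prop :=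
  x ≤ y ∧ ∀ z : X, y ≤ z → ∀ P : Prop, z = x ⊔ (⨆ _ : P, z) → P

/-- In a sup-lattice with least element `⊥`, the following are equivalent:
(i) `⊥ ⊏ y`; (ii) every family whose supremum dominates `y` has inhabited
index type; (iii) some `x` satisfies `x ⊏ y`. -/
theorem positive_element_equivalent {X : Type u} [CompleteLattice X] (y : X) :
    (SBelowLat (⊥ : X) y ↔ ∀ {I : Type v} (α : I → X), y ≤ iSup α → Nonempty I) ∧
    (SBelowLat (⊥ : X) y ↔ ∃ x : X, SBelowLat x y) := by
  have h1 : SBelowLat (⊥ : X) y ↔ ∀ {I : Type v} (α : I → X), y ≤ iSup α → Nonempty I := by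
    constructor
    · rintro ⟨-, h⟩ I α hy
      refine h (iSup α) hy (Nonempty I) ?_
      rw [bot_sup_eq]
      apply le_antisymm
      · exact iSup_le fun i => le_iSup_of_le ⟨i⟩ (le_iSup α i)
      · exact iSup_le fun _ => le_rfl
    · intro h
      refine ⟨bot_le, fun z hz P hzP => ?_⟩
      rw [bot_sup_eq] at hzP
      have : y ≤ iSup (fun _ : ULift.{v} (PLift P) => z) := by
        calc y ≤ z := hz
        _ = ⨆ _ : P, z := hzP
        _ ≤ ⨆ _ : ULift.{v} (PLift P), z := iSup_le fun p => le_iSup_of_le ⟨⟨p⟩⟩ le_rfl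
      exact (h (fun _ : ULift.{v} (PLift P) => z) this).elim fun p => p.down.down
  refine ⟨h1, ?_, fun ⟨x, hx⟩ => ?_⟩
  · intro h
    exact ⟨⊥, h⟩
  · obtain ⟨hxy, h⟩ := hx
    refine ⟨bot_le, fun z hz P hzP => ?_⟩
    rw [bot_sup_eq] at hzP
    refine h z hz P ?_
    rw [← hzP, sup_eq_right.mpr (hxy.trans hz)]
end

section
/- In a directed-complete partial order D, if x ≤ y, x ≠ y, and y is compact (way below itself), then x is strictly below y: for every z ≥ y and proposition P, z = sup(δ_{x,z,P}) implies P. Consequently, a compact element x of a dcpo with least element ⊥ is positive (⊥ ⊏ x) if and only if x ≠ ⊥. -/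
open Set in
/-- `x` is way below `y` in a dcpo: every directed family whose least upper
bound dominates `y` contains an element above `x`. -/
def WayBelow.{u, v} {D : Type u} [PartialOrder D] (x y : D) : Prop :=
  ∀ {I : Type v} (α : I → D), Directed (· ≤ ·) α →
    ∀ s : D, IsLUB (Set.range α) s → y ≤ s → ∃ i, x ≤ α i

/-- `s` is the supremum of the (directed) family `δ_{x,z,P}`. -/
def IsSupDelta {D : Type u} [PartialOrder D] (x z : D) (P : Prop) (s : D) : Prop :=
  (x ≤ s ∧ (P → z ≤ s)) ∧ ∀ t : D, x ≤ t → (P → z ≤ t) → s ≤ t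

/-- `x` is strictly below `y`. -/
def SBelow {D : Type u} [PartialOrder D] (x y : D) : Prop :=
  x ≤ y ∧ ∀ z : D, y ≤ z → ∀ P : Prop, ∀ s : D, IsSupDelta x z P s → z = s → P

/-- In a dcpo, if `x ≤ y`, `x ≠ y` and `y` is compact (way below itself), then
`x` is strictly below `y`. Consequently a compact element `x` of a dcpo with
least element `⊥` is positive iff `x ≠ ⊥`. -/
theorem compact_sbelow {D : Type u} [PartialOrder D]
    (hdc : ∀ {I : Type v} (α : I → D), Directed (· ≤ ·) α →
      ∃ s : D, IsLUB (Set.range α) s) :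
    (∀ x y : D, x ≤ y → x ≠ y → WayBelow.{u, v} y y → SBelow x y) ∧
    (∀ bot : D, (∀ d : D, bot ≤ d) →
      ∀ x : D, WayBelow.{u, v} x x → (SBelow bot x ↔ x ≠ bot)) := by
  have main : ∀ x y : D, x ≤ y → x ≠ y → WayBelow.{u, v} y y → SBelow x y := by
    intro x y hxy hne hc
    refine ⟨hxy, fun z hyz P s hs hzs => ?_⟩
    set α : (PUnit.{v+1} ⊕ ULift.{v} (PLift P)) → D :=
      fun i => Sum.elim (fun _ => x) (fun _ => z) i with hα
    have hdir : Directed (· ≤ ·) α := by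
      rintro (i | p) (j | q)
      · exact ⟨Sum.inl PUnit.unit, le_refl x, le_refl x⟩
      · exact ⟨Sum.inr q, hxy.trans hyz, le_refl z⟩
      · exact ⟨Sum.inr p, le_refl z, hxy.trans hyz⟩
      · exact ⟨Sum.inr p, le_refl z, le_refl z⟩
    have hlub : IsLUB (Set.range α) s := by
      constructor
      · rintro d ⟨(i | p), rfl⟩
        · exact hs.1.1
        · exact hs.1.2 p.down.down
      · intro t ht
        refine hs.2 t (ht ⟨Sum.inl PUnit.unit, rfl⟩) (fun hp => ht ⟨Sum.inr ⟨⟨hp⟩⟩, rfl⟩)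
    have hys : y ≤ s := hzs ▸ hyz
    obtain ⟨i, hi⟩ := hc α hdir s hlub hys
    rcases i with i | p
    · exact absurd (le_antisymm hxy hi) hne
    · exact p.down.down
  refine ⟨main, fun bot hbot x hc => ?_⟩
  constructor
  · rintro ⟨_, h⟩ rfl
    exact h x le_rfl False x ⟨⟨le_rfl, fun f => f.elim⟩, fun t ht _ => ht⟩ rfl
  · intro hne
    exact main bot x (hbot x) (Ne.symm hne) hc
end
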